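/- arXiv:1402.3119 — 2 statements merged into one kernel-verified Lean document; each statement's English description precedes it below -/
import Mathlib

section
/- Lemma 2, first part: for every integer r ≥ 1, 3·|T(r)| ≤ 2·|V(r)| (i.e. |T(r)| ≤ (2/3)|V(r)|). -/
/-!
Double counting of vertex–triangle incidences. Every triangle of `T r` has its three vertices
in `V r`. Conversely a vertex `v` can only lie in the triangles indexed by `v`, `v - (0,1)` and
`v - (1,1)`, whose values of `a + b` are consecutive integers; the one divisible by `3` is
excluded from `T r`, so `v` lies in at most two triangles. Hence `3 |T r| ≤ 2 |V r|`.
-/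

/-- Vertex set of the cellular interference graph: pairs `(a,b)` identified with
the Eisenstein integer `a + bω`, where `ω = (−1+i√3)/2`, satisfying
`|Re(a+bω)| ≤ r` and `|Im(a+bω)| ≤ (√3/2)r`, i.e. `|2a − b| ≤ 2r` and `|b| ≤ r`. -/
noncomputable def V (r : ℤ) : Finset (ℤ × ℤ) :=
  (Finset.Icc (-(2 * r)) (2 * r) ×ˢ Finset.Icc (-r) r).filter
    (fun p => |2 * p.1 - p.2| ≤ 2 * r ∧ |p.2| ≤ r)

/-- `f(a,b) = (a+b) mod 3`. -/
def f (p : ℤ × ℤ) : ℤ := (p.1 + p.2) % 3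

/-- Triangle index set: `(a,b)` with `f(a,b) ≠ 0` such that all three points
`(a,b)`, `(a,b+1)`, `(a+1,b+1)` lie in `V r`. -/
noncomputable def T (r : ℤ) : Finset (ℤ × ℤ) :=
  (V r).filter (fun p => f p ≠ 0 ∧ (p.1, p.2 + 1) ∈ V r ∧ (p.1 + 1, p.2 + 1) ∈ V r)

/-- The vertex set of the triangle indexed by `p = (a,b)`:
`{(a,b), (a,b+1), (a+1,b+1)}`. -/
def triVerts (p : ℤ × ℤ) : Finset (ℤ × ℤ) := {p, (p.1, p.2 + 1), (p.1 + 1, p.2 + 1)}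

lemma mem_triVerts_iff {v p : ℤ × ℤ} :
    v ∈ triVerts p ↔ p = v ∨ p = (v.1, v.2 - 1) ∨ p = (v.1 - 1, v.2 - 1) := by
  simp only [triVerts, Finset.mem_insert, Finset.mem_singleton, Prod.ext_iff]
  omega

lemma card_triVerts (p : ℤ × ℤ) : (triVerts p).card = 3 := by
  rw [triVerts, Finset.card_insert_of_notMem, Finset.card_insert_of_notMem,
    Finset.card_singleton]
  · simp only [Finset.mem_singleton, Prod.ext_iff]; omega
  · simp only [Finset.mem_insert, Finset.mem_singleton, Prod.ext_iff]; omega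

lemma triVerts_subset_V_of_mem_T {r : ℤ} {p : ℤ × ℤ} (hp : p ∈ T r) :
    triVerts p ⊆ V r := by
  obtain ⟨hpV, -, hp₂, hp₃⟩ := Finset.mem_filter.mp hp
  intro v hv
  simp only [triVerts, Finset.mem_insert, Finset.mem_singleton] at hv
  rcases hv with rfl | rfl | rfl <;> assumption

lemma card_filter_mem_triVerts_le_two {S : Finset (ℤ × ℤ)} (hS : ∀ p ∈ S, f p ≠ 0)
    (v : ℤ × ℤ) : (S.filter fun p => v ∈ triVerts p).card ≤ 2 := by
  set A : Finset (ℤ × ℤ) := {v, (v.1, v.2 - 1), (v.1 - 1, v.2 - 1)}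
  -- the values of `a + b` on `A` are consecutive integers
  obtain ⟨x, hxA, hx⟩ : ∃ x ∈ A, f x = 0 := by
    simp only [A, Finset.mem_insert, Finset.mem_singleton, exists_eq_or_imp, exists_eq_left, f]
    omega
  have hsub : (S.filter fun p => v ∈ triVerts p) ⊆ A.erase x := by
    intro p hp
    obtain ⟨hpS, hvp⟩ := Finset.mem_filter.mp hp
    refine Finset.mem_erase.mpr ⟨fun hpx => hS p hpS (hpx ▸ hx), ?_⟩
    simpa only [A, Finset.mem_insert, Finset.mem_singleton] using mem_triVerts_iff.mp hvp
  calc _ ≤ (A.erase x).card := Finset.card_le_card hsub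
    _ = A.card - 1 := Finset.card_erase_of_mem hxA
    _ ≤ 2 := by have : A.card ≤ 3 := Finset.card_le_three; omega

/-- The number `n_v` of triangles of `T r` whose vertex set contains `v`. -/
noncomputable def nTri (r : ℤ) (v : ℤ × ℤ) : ℕ := ((T r).filter (fun p => v ∈ triVerts p)).card

lemma nTri_le_two (r : ℤ) (v : ℤ × ℤ) : nTri r v ≤ 2 :=
  card_filter_mem_triVerts_le_two (fun _ hp => (Finset.mem_filter.mp hp).2.1) v

theorem card_T_le_general (r : ℤ) :
    3 * (T r).card ≤ 2 * (V r).card := by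
  have three_vertices :
      ∀ p ∈ T r, ((V r).bipartiteAbove (fun p v => v ∈ triVerts p) p).card = 3 := fun p hp => by
      rw [Finset.bipartiteAbove, Finset.filter_mem_eq_inter,
        Finset.inter_eq_right.mpr (triVerts_subset_V_of_mem_T hp), card_triVerts]
  have := Finset.card_mul_le_card_mul _ (fun p hp => (three_vertices p hp).ge)
    (fun v _ => nTri_le_two r v)
  linarith

/-- **Lemma 2, first part:** `3·|T(r)| ≤ 2·|V(r)|`, i.e. `|T(r)| ≤ (2/3)|V(r)|`. -/
theorem card_T_le (r : ℤ) (hr : 1 ≤ r) :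
    3 * (T r).card ≤ 2 * (V r).card :=
  card_T_le_general r
end

section
/- Lemma 2, second part (square-root bound on boundary vertices): for every integer r ≥ 1, |V_ex(r)| ≤ 7·√(|V(r)|), as an inequality of real numbers. -/
/-- The boundary vertices: those belonging to fewer than two triangles. -/
noncomputable def Vex (r : ℤ) : Finset (ℤ × ℤ) := (V r).filter (fun v => nTri r v < 2)

/-!
A vertex `(a, b)` with `|2a - b| ≤ 2r - 2` and `|b| ≤ r - 1` is a vertex of the triangles indexed
by `(a, b)`, `(a, b - 1)` and `(a - 1, b - 1)`, which all fit in `V r`; their values of `f` are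
the three residues of `a + b`, `a + b - 1`, `a + b - 2` mod 3, so two of them lie in `T r`.
Hence every boundary vertex lies on one of the four sides `2a - b ≥ 2r - 1`, `2a - b ≤ 1 - 2r`,
`b = r`, `b = -r`, each with at most `2r + 1` points, and `|V_ex(r)| ≤ 8r + 4`. On the other hand
`V r` contains the box `|a| ≤ ⌊r/2⌋, |b| ≤ r`, so `|V(r)| ≥ r(2r + 1)`, and
`(8r + 4)² ≤ 49 r (2r + 1)` for `r ≥ 1`.
-/

open Finset

lemma mem_V_iff {r : ℤ} {v : ℤ × ℤ} : v ∈ V r ↔ |2 * v.1 - v.2| ≤ 2 * r ∧ |v.2| ≤ r := by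
  simp only [V, mem_filter, mem_product, mem_Icc, abs_le]
  omega

lemma mem_T_iff {r : ℤ} {p : ℤ × ℤ} :
    p ∈ T r ↔ p ∈ V r ∧ f p ≠ 0 ∧ (p.1, p.2 + 1) ∈ V r ∧ (p.1 + 1, p.2 + 1) ∈ V r :=
  mem_filter

lemma two_le_nTri_of_interior {r a b : ℤ} (ha : |2 * a - b| ≤ 2 * r - 2) (hb : |b| ≤ r - 1) :
    2 ≤ nTri r (a, b) := by
  rw [abs_le] at ha hb
  have mem : ∀ p ∈ ({(a, b), (a, b - 1), (a - 1, b - 1)} : Finset (ℤ × ℤ)), f p ≠ 0 →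
      p ∈ (T r).filter (fun p => (a, b) ∈ triVerts p) := by
    intro p hp hf
    simp only [mem_insert, mem_singleton] at hp
    refine mem_filter.mpr ⟨mem_T_iff.mpr ⟨?_, hf, ?_, ?_⟩, ?_⟩ <;>
      rcases hp with rfl | rfl | rfl <;>
      simp only [mem_V_iff, abs_le, triVerts, mem_insert, mem_singleton, Prod.ext_iff, true_and,
        true_or] <;> omega
  refine one_lt_card.mpr ?_
  have : (a + b) % 3 = 0 ∨ (a + b) % 3 = 1 ∨ (a + b) % 3 = 2 := by omega
  rcases this with h | h | h
  · exact ⟨(a, b - 1), mem _ (by simp) (by simp only [f]; omega),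
      (a - 1, b - 1), mem _ (by simp) (by simp only [f]; omega),
      by simp only [ne_eq, Prod.ext_iff]; omega⟩
  · exact ⟨(a, b), mem _ (by simp) (by simp only [f]; omega),
      (a - 1, b - 1), mem _ (by simp) (by simp only [f]; omega),
      by simp only [ne_eq, Prod.ext_iff]; omega⟩
  · exact ⟨(a, b), mem _ (by simp) (by simp only [f]; omega),
      (a, b - 1), mem _ (by simp) (by simp only [f]; omega),
      by simp only [ne_eq, Prod.ext_iff]; omega⟩

lemma on_side_of_mem_Vex {r a b : ℤ} (hv : (a, b) ∈ Vex r) :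
    2 * r - 1 ≤ 2 * a - b ∨ 2 * a - b ≤ 1 - 2 * r ∨ b = r ∨ b = -r := by
  obtain ⟨hV, hn⟩ := mem_filter.mp hv
  rw [mem_V_iff, abs_le, abs_le] at hV
  by_contra! h
  have := two_le_nTri_of_interior (r := r) (a := a) (b := b) (abs_le.mpr ⟨by omega, by omega⟩)
    (abs_le.mpr ⟨by omega, by omega⟩)
  omega

lemma card_le_of_injOn_Icc {α : Type*} {s : Finset α} {g : α → ℤ} {lo hi : ℤ} (hle : lo ≤ hi + 1)
    (hg : Set.MapsTo g s (Icc lo hi)) (hinj : Set.InjOn g s) : (#s : ℤ) ≤ hi + 1 - lo := by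
  rw [← Int.card_Icc_of_le lo hi hle]
  exact_mod_cast card_le_card_of_injOn g hg hinj

lemma card_Vex_le {r : ℤ} (hr : 0 ≤ r) : (#(Vex r) : ℤ) ≤ 4 * (2 * r + 1) := by
  have side : ∀ (P : ℤ × ℤ → Prop) [DecidablePred P] (g : ℤ × ℤ → ℤ),
      (∀ v ∈ V r, P v → g v ∈ Icc (-r) r) → (∀ v ∈ V r, ∀ w ∈ V r, P v → P w → g v = g w → v = w) →
      (#{v ∈ Vex r | P v} : ℤ) ≤ 2 * r + 1 := by
    intro P _ g hg hinj
    have := card_le_of_injOn_Icc (s := {v ∈ Vex r | P v}) (by omega)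
      (fun v hv => hg v (mem_filter.mp (mem_filter.mp hv).1).1 (mem_filter.mp hv).2)
      (fun v hv w hw => hinj v (mem_filter.mp (mem_filter.mp hv).1).1 w
        (mem_filter.mp (mem_filter.mp hw).1).1 (mem_filter.mp hv).2 (mem_filter.mp hw).2)
    omega
  have right := side (fun v => 2 * r - 1 ≤ 2 * v.1 - v.2) Prod.snd ?_ ?_
  have left := side (fun v => 2 * v.1 - v.2 ≤ 1 - 2 * r) Prod.snd ?_ ?_
  -- on a horizontal side `b` is fixed, and `a - ⌊b/2⌋` ranges over `[-r, r]`
  have top := side (fun v => v.2 = r) (fun v => v.1 - v.2 / 2) ?_ ?_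
  have bottom := side (fun v => v.2 = -r) (fun v => v.1 - v.2 / 2) ?_ ?_
  · have hsub : Vex r ⊆ {v ∈ Vex r | 2 * r - 1 ≤ 2 * v.1 - v.2} ∪
        {v ∈ Vex r | 2 * v.1 - v.2 ≤ 1 - 2 * r} ∪ {v ∈ Vex r | v.2 = r} ∪
        {v ∈ Vex r | v.2 = -r} := by
      rintro ⟨a, b⟩ hv
      simpa only [mem_union, mem_filter, hv, true_and, or_assoc] using on_side_of_mem_Vex hv
    have := (card_le_card hsub).trans <| (card_union_le _ _).trans <| add_le_add_left
      ((card_union_le _ _).trans <| add_le_add_left (card_union_le _ _) _) _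
    omega
  all_goals
    first
    | rintro ⟨a, b⟩ hv
      rw [mem_V_iff, abs_le, abs_le] at hv
      simp only [mem_Icc]
      omega
    | rintro ⟨a, b⟩ hv ⟨c, d⟩ hw
      rw [mem_V_iff, abs_le, abs_le] at hv hw
      simp only [Prod.ext_iff]
      omega

lemma box_subset_V (r : ℤ) : Icc (-(r / 2)) (r / 2) ×ˢ Icc (-r) r ⊆ V r := by
  rintro ⟨a, b⟩ h
  rw [mem_product, mem_Icc, mem_Icc] at h
  rw [mem_V_iff, abs_le, abs_le]
  omega

lemma le_card_V {r : ℤ} (hr : 0 ≤ r) : r * (2 * r + 1) ≤ (#(V r) : ℤ) := by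
  have hbox := card_le_card (box_subset_V r)
  rw [card_product, Int.card_Icc, Int.card_Icc] at hbox
  zify [Int.toNat_of_nonneg (show 0 ≤ r / 2 + 1 - -(r / 2) by omega),
    Int.toNat_of_nonneg (show 0 ≤ r + 1 - -r by omega)] at hbox
  have hwidth : r * (2 * r + 1) ≤ (r / 2 + 1 - -(r / 2)) * (r + 1 - -r) :=
    mul_le_mul (by omega) (by omega) (by omega) (by omega)
  exact hwidth.trans hbox

/-- **Lemma 2, second part:** square-root bound on the boundary vertices:
`|V_ex(r)| ≤ 7·√(|V(r)|)` as real numbers. -/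
theorem card_Vex_le_sqrt (r : ℤ) (hr : 1 ≤ r) :
    ((Vex r).card : ℝ) ≤ 7 * Real.sqrt ((V r).card : ℝ) := by
  have hVex : ((Vex r).card : ℝ) ≤ 4 * (2 * r + 1) := by exact_mod_cast card_Vex_le (by omega)
  have hV : (r : ℝ) * (2 * r + 1) ≤ (V r).card := by exact_mod_cast le_card_V (by omega)
  have hr' : (1 : ℝ) ≤ r := by exact_mod_cast hr
  have hsqrt := Real.sq_sqrt (Nat.cast_nonneg (α := ℝ) (V r).card)
  nlinarith [Real.sqrt_nonneg ((V r).card : ℝ)]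
end
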